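/- arXiv:1707.00653 — 2 statements merged into one kernel-verified Lean document; each statement's English description precedes it below -/
import Mathlib

section
/- Let φ : ℂ³ → ℂ⁵ be the polynomial map φ(a,b,c) = (a, b, c², (a−b)c, abc³ + c⁵), and in coordinates (x, y, z, t, u) on ℂ⁵ let M be the 2×4 matrix with rows (t, u, (x−y)z, (xy+z)z²) and (x−y, (xy+z)z, t, u). Then the Zariski closure of the image of φ equals the common zero locus in ℂ⁵ of the six 2×2 minors of M. -/
open MvPolynomial

/-- The parametrisation `φ(a,b,c) = (a, b, c², (a−b)c, abc³ + c⁵)` of the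
(affine cone over the) divisor `D ⊂ ℙ(1,1,2,2,5)`. -/
noncomputable def phiD : (Fin 3 → ℂ) → (Fin 5 → ℂ) := fun p =>
  ![p 0, p 1, (p 2) ^ 2, (p 0 - p 1) * p 2, p 0 * p 1 * (p 2) ^ 3 + (p 2) ^ 5]

/-- The first row `(t, u, (x−y)z, (xy+z)z²)` of the matrix `M`,
in coordinates `x = X 0, y = X 1, z = X 2, t = X 3, u = X 4` on `ℂ⁵`. -/
noncomputable def Mrow1 : Fin 4 → MvPolynomial (Fin 5) ℂ :=
  ![X 3, X 4, (X 0 - X 1) * X 2, (X 0 * X 1 + X 2) * X 2 ^ 2]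

/-- The second row `(x−y, (xy+z)z, t, u)` of the matrix `M`. -/
noncomputable def Mrow2 : Fin 4 → MvPolynomial (Fin 5) ℂ :=
  ![X 0 - X 1, (X 0 * X 1 + X 2) * X 2, X 3, X 4]

/-- The six `2×2` minors of the `2×4` matrix `M`. -/
noncomputable def minorsM : Set (MvPolynomial (Fin 5) ℂ) :=
  { g | ∃ i j : Fin 4, i < j ∧ g = Mrow1 i * Mrow2 j - Mrow1 j * Mrow2 i }

/-!
Every point of the zero locus of the minors lies in the image of `φ`: writing
`a = x - y` and `b = (xy + z)z`, the minors force `t² = a²z`, `u² = b²z` and `tb = ua`,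
so a single square root `c` of `z` satisfies `ac = t` and `bc = u`, and then
`φ(x, y, c) = (x, y, z, t, u)`. Hence the image is already Zariski closed.
-/

section SquareRoots

variable {K : Type*} [Field K] [IsAlgClosed K]

theorem exists_sq_eq_and_mul_eq {z a t : K} (h : t ^ 2 = a ^ 2 * z) :
    ∃ c, c ^ 2 = z ∧ a * c = t := by
  obtain ⟨d, hd⟩ := IsAlgClosed.exists_pow_nat_eq z two_pos
  have hsq : (a * d) ^ 2 = t ^ 2 := by rw [h, mul_pow, hd]
  rcases sq_eq_sq_iff_eq_or_eq_neg.mp hsq with had | had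
  · exact ⟨d, hd, had⟩
  · exact ⟨-d, by rw [neg_sq, hd], by rw [mul_neg, had, neg_neg]⟩

theorem exists_sq_eq_and_mul_eq_and_mul_eq {z a b t u : K} (ht : t ^ 2 = a ^ 2 * z)
    (hu : u ^ 2 = b ^ 2 * z) (htu : t * b = u * a) :
    ∃ c, c ^ 2 = z ∧ a * c = t ∧ b * c = u := by
  by_cases ha : a = 0
  · obtain ⟨c, hc, hbc⟩ := exists_sq_eq_and_mul_eq hu
    have ht0 : t = 0 := pow_eq_zero_iff two_ne_zero |>.mp (by rw [ht, ha]; ring)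
    exact ⟨c, hc, by rw [ha, ht0, zero_mul], hbc⟩
  · obtain ⟨c, hc, hac⟩ := exists_sq_eq_and_mul_eq ht
    refine ⟨c, hc, hac, mul_left_cancel₀ ha ?_⟩
    linear_combination b * hac + htu

end SquareRoots

theorem eval_phiD_eq_zero_of_mem_minorsM (p : Fin 3 → ℂ) {g : MvPolynomial (Fin 5) ℂ}
    (hg : g ∈ minorsM) : eval (phiD p) g = 0 := by
  obtain ⟨i, j, hij, rfl⟩ := hg
  fin_cases i <;> fin_cases j <;> simp [Mrow1, Mrow2, phiD] at hij ⊢ <;> ring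

theorem mem_range_phiD_of_eval_minorsM (v : Fin 5 → ℂ)
    (hv : ∀ g ∈ minorsM, eval v g = 0) : v ∈ Set.range phiD := by
  have minor (i j : Fin 4) (hij : i < j) :
      eval v (Mrow1 i * Mrow2 j - Mrow1 j * Mrow2 i) = 0 := hv _ ⟨i, j, hij, rfl⟩
  have h02 := minor 0 2 (by decide)
  have h13 := minor 1 3 (by decide)
  have h01 := minor 0 1 (by decide)
  simp only [Mrow1, Mrow2, map_sub, map_mul, map_add, map_pow, eval_X, Matrix.cons_val]
    at h02 h13 h01
  obtain ⟨c, hc, htc, huc⟩ :=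
    exists_sq_eq_and_mul_eq_and_mul_eq (z := v 2) (a := v 0 - v 1)
      (b := (v 0 * v 1 + v 2) * v 2) (t := v 3) (u := v 4)
      (by linear_combination h02) (by linear_combination h13) (by linear_combination h01)
  refine ⟨![v 0, v 1, c], funext fun i => ?_⟩
  fin_cases i <;>
    simp only [phiD, Fin.zero_eta, Fin.mk_one, Fin.reduceFinMk, Matrix.cons_val_zero,
      Matrix.cons_val_one, Matrix.cons_val]
  · exact hc
  · exact htc
  · linear_combination (v 0 * v 1 * c + c ^ 3 + c * v 2) * hc + huc

theorem range_phiD_eq_zeroLocus_span_minorsM :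
    Set.range phiD = zeroLocus ℂ (Ideal.span minorsM) := by
  rw [zeroLocus_span]
  ext v
  constructor
  · rintro ⟨p, rfl⟩ g hg
    exact eval_phiD_eq_zero_of_mem_minorsM p hg
  · exact mem_range_phiD_of_eval_minorsM v

/-- Let `φ : ℂ³ → ℂ⁵` be `φ(a,b,c) = (a, b, c², (a−b)c, abc³ + c⁵)`, and let
`M` be the `2×4` matrix with rows `(t, u, (x−y)z, (xy+z)z²)` and
`(x−y, (xy+z)z, t, u)` in coordinates `(x,y,z,t,u)` on `ℂ⁵`.  Then the Zariski
closure of the image of `φ` (the zero locus of the vanishing ideal of the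
image) equals the common zero locus of the six `2×2` minors of `M`. -/
theorem zariski_closure_image_eq_zeroLocus_minors :
    zeroLocus ℂ (vanishingIdeal ℂ (Set.range phiD)) = zeroLocus ℂ (Ideal.span minorsM) := by
  rw [range_phiD_eq_zeroLocus_span_minorsM]
  exact zeroLocus_vanishingIdeal_galoisConnection.l_u_l_eq_l _
end

section
/- Let f = x⁶ + y³ + z³ + t³ + u² + v² and g = y²z + z²t + t²y + uv in ℂ[x, y, z, t, u, v]. Then at every point p ∈ ℂ⁶ with p ≠ 0 and f(p) = g(p) = 0, the 2×6 Jacobian matrix (∂(f,g)/∂(x,y,z,t,u,v)) evaluated at p has rank 2. (Hence X_{6,6} : (f = g = 0) ⊂ ℙ(1,2,2,2,3,3) is quasismooth.) -/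
open MvPolynomial

/-- `f = x⁶ + y³ + z³ + t³ + u² + v²` in coordinates
`x = X 0, y = X 1, z = X 2, t = X 3, u = X 4, v = X 5`. -/
noncomputable def f3508 : MvPolynomial (Fin 6) ℂ :=
  X 0 ^ 6 + X 1 ^ 3 + X 2 ^ 3 + X 3 ^ 3 + X 4 ^ 2 + X 5 ^ 2

/-- `g = y²z + z²t + t²y + uv`. -/
noncomputable def g3508 : MvPolynomial (Fin 6) ℂ :=
  X 1 ^ 2 * X 2 + X 2 ^ 2 * X 3 + X 3 ^ 2 * X 1 + X 4 * X 5

/-- A `2 × 6` matrix with a nonvanishing `2 × 2` minor has rank `2`. -/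
lemma rank_eq_two_of_minor {M : Matrix (Fin 2) (Fin 6) ℂ} {j k : Fin 6}
    (h : M 0 j * M 1 k - M 0 k * M 1 j ≠ 0) : M.rank = 2 := by
  have hle : M.rank ≤ 2 := by simpa using M.rank_le_card_height
  have hdet : (M.submatrix id ![j, k]).det ≠ 0 := by
    rw [Matrix.det_fin_two]
    simpa using h
  have hsub : (M.submatrix id ![j, k]).rank = 2 := by
    have := Matrix.rank_of_isUnit (M.submatrix id ![j, k])
      ((Matrix.isUnit_iff_isUnit_det _).mpr (isUnit_iff_ne_zero.mpr hdet))
    simpa using this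
  have hge : 2 ≤ M.rank := by
    have h1 : M.submatrix id ![j, k]
        = M * (1 : Matrix (Fin 6) (Fin 6) ℂ).submatrix (Equiv.refl (Fin 6)) ![j, k] := by
      rw [Matrix.mul_submatrix_one]
      rfl
    calc 2 = (M.submatrix id ![j, k]).rank := hsub.symm
      _ ≤ M.rank := by
          rw [h1]; exact Matrix.rank_mul_le_left _ _
  exact le_antisymm hle hge

/-- At every nonzero point `p ∈ ℂ⁶` with `f(p) = g(p) = 0`, the `2×6` Jacobian
matrix of `(f, g)` has rank 2.  Hence
`X_{6,6} : (f = g = 0) ⊂ ℙ(1,2,2,2,3,3)` is quasismooth. -/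
theorem X66_quasismooth (p : Fin 6 → ℂ) (hp : p ≠ 0)
    (hf : eval p f3508 = 0) (hg : eval p g3508 = 0) :
    (Matrix.of fun (i : Fin 2) (j : Fin 6) =>
      eval p (pderiv j (![f3508, g3508] i))).rank = 2 := by
  set M : Matrix (Fin 2) (Fin 6) ℂ :=
    Matrix.of fun (i : Fin 2) (j : Fin 6) =>
      eval p (pderiv j (![f3508, g3508] i)) with hMdef
  have F0 : eval p (pderiv (0 : Fin 6) f3508) = 6 * p 0 ^ 5 := by
    simp [f3508, pderiv_X, Pi.single_apply]
  have F1 : eval p (pderiv (1 : Fin 6) f3508) = 3 * p 1 ^ 2 := by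
    simp [f3508, pderiv_X, Pi.single_apply]
  have F2 : eval p (pderiv (2 : Fin 6) f3508) = 3 * p 2 ^ 2 := by
    simp [f3508, pderiv_X, Pi.single_apply]
  have F3 : eval p (pderiv (3 : Fin 6) f3508) = 3 * p 3 ^ 2 := by
    simp [f3508, pderiv_X, Pi.single_apply]
  have F4 : eval p (pderiv (4 : Fin 6) f3508) = 2 * p 4 := by
    simp [f3508, pderiv_X, Pi.single_apply]
  have F5 : eval p (pderiv (5 : Fin 6) f3508) = 2 * p 5 := by
    simp [f3508, pderiv_X, Pi.single_apply]
  have G0 : eval p (pderiv (0 : Fin 6) g3508) = 0 := by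
    simp [g3508, pderiv_X, Pi.single_apply]
  have G1 : eval p (pderiv (1 : Fin 6) g3508) = 2 * p 1 * p 2 + p 3 ^ 2 := by
    simp [g3508, pderiv_X, Pi.single_apply]; ring
  have G2 : eval p (pderiv (2 : Fin 6) g3508) = 2 * p 2 * p 3 + p 1 ^ 2 := by
    simp [g3508, pderiv_X, Pi.single_apply]; ring
  have G3 : eval p (pderiv (3 : Fin 6) g3508) = 2 * p 3 * p 1 + p 2 ^ 2 := by
    simp [g3508, pderiv_X, Pi.single_apply]; ring
  have G4 : eval p (pderiv (4 : Fin 6) g3508) = p 5 := by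
    simp [g3508, pderiv_X, Pi.single_apply]
  have G5 : eval p (pderiv (5 : Fin 6) g3508) = p 4 := by
    simp [g3508, pderiv_X, Pi.single_apply]
  have hf' : p 0 ^ 6 + p 1 ^ 3 + p 2 ^ 3 + p 3 ^ 3 + p 4 ^ 2 + p 5 ^ 2 = 0 := by
    rw [f3508] at hf; simpa using hf
  have hg' : p 1 ^ 2 * p 2 + p 2 ^ 2 * p 3 + p 3 ^ 2 * p 1 + p 4 * p 5 = 0 := by
    rw [g3508] at hg; simpa using hg
  have key : ∃ j k : Fin 6, M 0 j * M 1 k - M 0 k * M 1 j ≠ 0 := by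
    by_contra hcon
    push_neg at hcon
    have E : ∀ j k : Fin 6,
        eval p (pderiv j f3508) * eval p (pderiv k g3508)
          - eval p (pderiv k f3508) * eval p (pderiv j g3508) = 0 := by
      intro j k
      simpa [hMdef] using hcon j k
    by_cases hx : p 0 = 0
    · -- x = 0
      have h45 : (2 * p 4) * (p 4) - (2 * p 5) * (p 5) = 0 := by
        have h := E 4 5; rw [F4, F5, G4, G5] at h; linear_combination h
      by_cases hu : p 4 = 0
      · -- u = 0, hence v = 0
        have hv : p 5 = 0 := by
          have h : p 5 ^ 2 = 0 := by linear_combination (-1/2 : ℂ) * h45 + p 4 * hu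
          exact pow_eq_zero_iff (by norm_num : (2 : ℕ) ≠ 0) |>.mp h
        have h12 : (3 * p 1 ^ 2) * (2 * p 2 * p 3 + p 1 ^ 2)
            - (3 * p 2 ^ 2) * (2 * p 1 * p 2 + p 3 ^ 2) = 0 := by
          have h := E 1 2; rw [F1, F2, G1, G2] at h; linear_combination h
        have h13 : (3 * p 1 ^ 2) * (2 * p 3 * p 1 + p 2 ^ 2)
            - (3 * p 3 ^ 2) * (2 * p 1 * p 2 + p 3 ^ 2) = 0 := by
          have h := E 1 3; rw [F1, F3, G1, G3] at h; linear_combination h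
        have h23 : (3 * p 2 ^ 2) * (2 * p 3 * p 1 + p 2 ^ 2)
            - (3 * p 3 ^ 2) * (2 * p 2 * p 3 + p 1 ^ 2) = 0 := by
          have h := E 2 3; rw [F2, F3, G2, G3] at h; linear_combination h
        have ht : p 3 = 0 := by
          have h : p 3 ^ 6 = 0 := by
            linear_combination
              (-1/9 * p 2 ^ 3 - 2/9 * p 1 * p 2 * p 3 + 2/3 * p 3 ^ 3) * hf'
              + (1/9 * p 1 * p 2 ^ 2 + 1/9 * p 1 ^ 2 * p 3 - 2/9 * p 2 * p 3 ^ 2) * hg'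
              + (1/27 * p 2 * p 3) * h12 + (-1/9 * p 3 ^ 2) * h13
              + (1/27 * p 2 ^ 2 + 1/27 * p 1 * p 3) * h23
              + (1/9 * p 2 ^ 3 * p 0 ^ 5 + 2/9 * p 1 * p 2 * p 3 * p 0 ^ 5
                  - 2/3 * p 3 ^ 3 * p 0 ^ 5) * hx
              + (1/9 * p 2 ^ 3 * p 4 + 2/9 * p 1 * p 2 * p 3 * p 4 - 2/3 * p 3 ^ 3 * p 4
                  - 1/9 * p 1 * p 2 ^ 2 * p 5 - 1/9 * p 1 ^ 2 * p 3 * p 5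
                  + 2/9 * p 2 * p 3 ^ 2 * p 5) * hu
              + (1/9 * p 2 ^ 3 * p 5 + 2/9 * p 1 * p 2 * p 3 * p 5
                  - 2/3 * p 3 ^ 3 * p 5) * hv
          exact pow_eq_zero_iff (by norm_num : (6 : ℕ) ≠ 0) |>.mp h
        have hz : p 2 = 0 := by
          have h : p 2 ^ 4 = 0 := by
            linear_combination (1/3 : ℂ) * h23
              + (-2 * p 1 * p 2 ^ 2 + 2 * p 2 * p 3 ^ 2 + p 1 ^ 2 * p 3) * ht
          exact pow_eq_zero_iff (by norm_num : (4 : ℕ) ≠ 0) |>.mp h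
        have hy : p 1 = 0 := by
          have h : p 1 ^ 3 = 0 := by
            linear_combination hf' - p 0 ^ 5 * hx - p 2 ^ 2 * hz - p 3 ^ 2 * ht
              - p 4 * hu - p 5 * hv
          exact pow_eq_zero_iff (by norm_num : (3 : ℕ) ≠ 0) |>.mp h
        apply hp
        funext i
        fin_cases i <;> simp only [Pi.zero_apply] <;> assumption
      · -- u ≠ 0
        have h15 : (3 * p 1 ^ 2) * (p 4) - (2 * p 5) * (2 * p 1 * p 2 + p 3 ^ 2) = 0 := by
          have h := E 1 5; rw [F1, F5, G1, G5] at h; linear_combination h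
        have h25 : (3 * p 2 ^ 2) * (p 4) - (2 * p 5) * (2 * p 2 * p 3 + p 1 ^ 2) = 0 := by
          have h := E 2 5; rw [F2, F5, G2, G5] at h; linear_combination h
        have h35 : (3 * p 3 ^ 2) * (p 4) - (2 * p 5) * (2 * p 3 * p 1 + p 2 ^ 2) = 0 := by
          have h := E 3 5; rw [F3, F5, G3, G5] at h; linear_combination h
        have hvu : p 5 = p 4 ∨ p 5 = -p 4 := by
          have h : (p 5 - p 4) * (p 5 + p 4) = 0 := by linear_combination (-1/2 : ℂ) * h45
          rcases mul_eq_zero.mp h with h | h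
          · exact Or.inl (sub_eq_zero.mp h)
          · exact Or.inr (eq_neg_of_add_eq_zero_left h)
        rcases hvu with hw | hw
        · -- v = u, ε = 1
          have hE1 : 4 * p 1 * p 2 + 2 * p 3 ^ 2 - 3 * p 1 ^ 2 = 0 := by
            have h : p 4 * (4 * p 1 * p 2 + 2 * p 3 ^ 2 - 3 * p 1 ^ 2) = 0 := by
              linear_combination -h15 + (-(4 * p 1 * p 2 + 2 * p 3 ^ 2)) * hw
            exact (mul_eq_zero.mp h).resolve_left hu
          have hE2 : 4 * p 2 * p 3 + 2 * p 1 ^ 2 - 3 * p 2 ^ 2 = 0 := by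
            have h : p 4 * (4 * p 2 * p 3 + 2 * p 1 ^ 2 - 3 * p 2 ^ 2) = 0 := by
              linear_combination -h25 + (-(4 * p 2 * p 3 + 2 * p 1 ^ 2)) * hw
            exact (mul_eq_zero.mp h).resolve_left hu
          have hE3 : 4 * p 3 * p 1 + 2 * p 2 ^ 2 - 3 * p 3 ^ 2 = 0 := by
            have h : p 4 * (4 * p 3 * p 1 + 2 * p 2 ^ 2 - 3 * p 3 ^ 2) = 0 := by
              linear_combination -h35 + (-(4 * p 3 * p 1 + 2 * p 2 ^ 2)) * hw
            exact (mul_eq_zero.mp h).resolve_left hu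
          have ht : p 3 = 0 := by
            have h : p 3 ^ 4 = 0 := by
              linear_combination
                (64/63 * p 1 * p 2 - 64/63 * p 2 ^ 2 - 16/9 * p 1 * p 3 + 32/9 * p 2 * p 3
                  - 44/21 * p 3 ^ 2) * hE1
                + (32/21 * p 1 * p 2 - 32/9 * p 2 ^ 2 - 8/3 * p 1 * p 3 + 16/63 * p 2 * p 3
                  + 242/63 * p 3 ^ 2) * hE2
                + (272/63 * p 1 * p 2 - 16/3 * p 2 ^ 2 - 220/63 * p 1 * p 3
                  + 472/63 * p 2 * p 3 - 109/63 * p 3 ^ 2) * hE3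
            exact pow_eq_zero_iff (by norm_num : (4 : ℕ) ≠ 0) |>.mp h
          have hz : p 2 = 0 := by
            have h : p 2 ^ 2 = 0 := by
              linear_combination (1/2 : ℂ) * hE3 + (-2 * p 1 + 3/2 * p 3) * ht
            exact pow_eq_zero_iff (by norm_num : (2 : ℕ) ≠ 0) |>.mp h
          have hy : p 1 = 0 := by
            have h : p 1 ^ 2 = 0 := by
              linear_combination (-1/3 : ℂ) * hE1 + (4/3 * p 1) * hz + (2/3 * p 3) * ht
            exact pow_eq_zero_iff (by norm_num : (2 : ℕ) ≠ 0) |>.mp h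
          exact hu (by
            have h : p 4 ^ 2 = 0 := by
              linear_combination (1/2 : ℂ) * hf' + (-1/2 * (p 5 + p 4)) * hw
                + (-1/2 * p 0 ^ 5) * hx + (-1/2 * p 1 ^ 2) * hy + (-1/2 * p 2 ^ 2) * hz
                + (-1/2 * p 3 ^ 2) * ht
            exact pow_eq_zero_iff (by norm_num : (2 : ℕ) ≠ 0) |>.mp h)
        · -- v = -u, ε = -1
          have hE1 : 4 * p 1 * p 2 + 2 * p 3 ^ 2 + 3 * p 1 ^ 2 = 0 := by
            have h : p 4 * (4 * p 1 * p 2 + 2 * p 3 ^ 2 + 3 * p 1 ^ 2) = 0 := by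
              linear_combination h15 + (4 * p 1 * p 2 + 2 * p 3 ^ 2) * hw
            exact (mul_eq_zero.mp h).resolve_left hu
          have hE2 : 4 * p 2 * p 3 + 2 * p 1 ^ 2 + 3 * p 2 ^ 2 = 0 := by
            have h : p 4 * (4 * p 2 * p 3 + 2 * p 1 ^ 2 + 3 * p 2 ^ 2) = 0 := by
              linear_combination h25 + (4 * p 2 * p 3 + 2 * p 1 ^ 2) * hw
            exact (mul_eq_zero.mp h).resolve_left hu
          have hE3 : 4 * p 3 * p 1 + 2 * p 2 ^ 2 + 3 * p 3 ^ 2 = 0 := by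
            have h : p 4 * (4 * p 3 * p 1 + 2 * p 2 ^ 2 + 3 * p 3 ^ 2) = 0 := by
              linear_combination h35 + (4 * p 3 * p 1 + 2 * p 2 ^ 2) * hw
            exact (mul_eq_zero.mp h).resolve_left hu
          have ht : p 3 = 0 := by
            have h : p 3 ^ 4 = 0 := by
              linear_combination
                (-64/1377 * p 1 * p 2 - 64/1377 * p 2 ^ 2 - 16/153 * p 1 * p 3
                  + 224/1377 * p 2 * p 3 + 28/153 * p 3 ^ 2) * hE1
                + (32/459 * p 1 * p 2 + 224/1377 * p 2 ^ 2 + 8/51 * p 1 * p 3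
                  - 16/1377 * p 2 * p 3 + 206/1377 * p 3 ^ 2) * hE2
                + (-16/1377 * p 1 * p 2 - 112/459 * p 2 ^ 2 - 292/1377 * p 1 * p 3
                  - 424/1377 * p 2 * p 3 + 97/459 * p 3 ^ 2) * hE3
            exact pow_eq_zero_iff (by norm_num : (4 : ℕ) ≠ 0) |>.mp h
          have hz : p 2 = 0 := by
            have h : p 2 ^ 2 = 0 := by
              linear_combination (1/2 : ℂ) * hE3 + (-2 * p 1 - 3/2 * p 3) * ht
            exact pow_eq_zero_iff (by norm_num : (2 : ℕ) ≠ 0) |>.mp h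
          have hy : p 1 = 0 := by
            have h : p 1 ^ 2 = 0 := by
              linear_combination (1/3 : ℂ) * hE1 + (-4/3 * p 1) * hz + (-2/3 * p 3) * ht
            exact pow_eq_zero_iff (by norm_num : (2 : ℕ) ≠ 0) |>.mp h
          exact hu (by
            have h : p 4 ^ 2 = 0 := by
              linear_combination (1/2 : ℂ) * hf' + (-1/2 * (p 5 - p 4)) * hw
                + (-1/2 * p 0 ^ 5) * hx + (-1/2 * p 1 ^ 2) * hy + (-1/2 * p 2 ^ 2) * hz
                + (-1/2 * p 3 ^ 2) * ht
            exact pow_eq_zero_iff (by norm_num : (2 : ℕ) ≠ 0) |>.mp h)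
    · -- x ≠ 0
      have hx5 : (6 : ℂ) * p 0 ^ 5 ≠ 0 := by
        simp [pow_eq_zero_iff, hx]
      have row2 : ∀ k : Fin 6, eval p (pderiv k g3508) = 0 := by
        intro k
        have h := E 0 k
        rw [F0, G0] at h
        have h' : (6 * p 0 ^ 5) * eval p (pderiv k g3508) = 0 := by linear_combination h
        exact (mul_eq_zero.mp h').resolve_left hx5
      have hq1 : 2 * p 1 * p 2 + p 3 ^ 2 = 0 := by rw [← G1]; exact row2 1
      have hq2 : 2 * p 2 * p 3 + p 1 ^ 2 = 0 := by rw [← G2]; exact row2 2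
      have hq3 : 2 * p 3 * p 1 + p 2 ^ 2 = 0 := by rw [← G3]; exact row2 3
      have hv : p 5 = 0 := by rw [← G4]; exact row2 4
      have hu : p 4 = 0 := by rw [← G5]; exact row2 5
      have hy : p 1 = 0 := by
        have h : p 1 ^ 4 = 0 := by
          linear_combination (-8/9 * p 1 * p 3) * hq1
            + (p 1 ^ 2 - 2/9 * p 2 * p 3) * hq2 + (4/9 * p 3 ^ 2) * hq3
        exact pow_eq_zero_iff (by norm_num : (4 : ℕ) ≠ 0) |>.mp h
      have ht : p 3 = 0 := by
        have h : p 3 ^ 2 = 0 := by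
          linear_combination hq1 - 2 * p 2 * hy
        exact pow_eq_zero_iff (by norm_num : (2 : ℕ) ≠ 0) |>.mp h
      have hz : p 2 = 0 := by
        have h : p 2 ^ 2 = 0 := by
          linear_combination hq3 - 2 * p 1 * ht
        exact pow_eq_zero_iff (by norm_num : (2 : ℕ) ≠ 0) |>.mp h
      exact hx (by
        have h : p 0 ^ 6 = 0 := by
          linear_combination hf' - p 1 ^ 2 * hy - p 2 ^ 2 * hz - p 3 ^ 2 * ht
            - p 4 * hu - p 5 * hv
        exact pow_eq_zero_iff (by norm_num : (6 : ℕ) ≠ 0) |>.mp h)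
  obtain ⟨j, k, hjk⟩ := key
  exact rank_eq_two_of_minor hjk
end
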